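/- There exist a constant K > 0 and an integer N₀ ≥ 2 such that for every integer N ≥ N₀ and every δv > 0, the matrix X is invertible and ‖X⁻¹Y‖₂ ≤ K·δv/δz²; that is, the 2-norm of the matrix W = X⁻¹Y is O(δv/δz²). -/

import Mathlib

/-- The `n×n` real tridiagonal matrix with 1-indexed subdiagonal entries
`sub_{i+1}` (at position `(i+1, i)`), diagonal entries `dia_i` and superdiagonal
entries `sup_i` (at position `(i, i+1)`). -/
def triMatR (n : ℕ) (sub dia sup : ℕ → ℝ) : Matrix (Fin n) (Fin n) ℝ :=
  Matrix.of fun i j =>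
    if i.val = j.val then dia (i.val + 1)
    else if i.val + 1 = j.val then sup (i.val + 1)
    else if j.val + 1 = i.val then sub (i.val + 1)
    else 0

/-- The operator norm of a real square matrix induced by the Euclidean vector norm,
i.e. its largest singular value. -/
noncomputable def opNorm2 {n : ℕ} (M : Matrix (Fin n) (Fin n) ℝ) : ℝ :=
  ‖LinearMap.toContinuousLinearMap (Matrix.toEuclideanLin M)‖

/-- The space step `δz = (z_r - z_l)/N`. -/
noncomputable def dz (zl zr : ℝ) (N : ℕ) : ℝ := (zr - zl) / N

/-- The grid point `z_i = z_l + i δz`. -/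
noncomputable def gridz (zl zr : ℝ) (N i : ℕ) : ℝ := zl + i * dz zl zr N

/-- First-order central difference `Δ_z f_i = (f_{i+1} - f_{i-1})/(2 δz)`. -/
noncomputable def Dz (f : ℝ → ℝ) (zl zr : ℝ) (N i : ℕ) : ℝ :=
  (f (gridz zl zr N (i + 1)) - f (gridz zl zr N (i - 1))) / (2 * dz zl zr N)

/-- Second-order central difference `Δ_zz f_i = (f_{i+1} - 2 f_i + f_{i-1})/δz²`. -/
noncomputable def Dzz (f : ℝ → ℝ) (zl zr : ℝ) (N i : ℕ) : ℝ :=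
  (f (gridz zl zr N (i + 1)) - 2 * f (gridz zl zr N i) + f (gridz zl zr N (i - 1))) /
    dz zl zr N ^ 2

/-- `γ_i = a_i/b_i + (2/b_i) Δ_z b_i`. -/
noncomputable def γc (a b : ℝ → ℝ) (zl zr : ℝ) (N i : ℕ) : ℝ :=
  a (gridz zl zr N i) / b (gridz zl zr N i) +
    (2 / b (gridz zl zr N i)) * Dz b zl zr N i

/-- `ζ_i = a_i - (δz²/12)((a_i/b_i) Δ_z a_i + (2/b_i) Δ_z a_i Δ_z b_i - Δ_zz a_i)`. -/
noncomputable def ζc (a b : ℝ → ℝ) (zl zr : ℝ) (N i : ℕ) : ℝ :=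
  a (gridz zl zr N i) - (dz zl zr N ^ 2 / 12) *
    ((a (gridz zl zr N i) / b (gridz zl zr N i)) * Dz a zl zr N i +
      (2 / b (gridz zl zr N i)) * Dz a zl zr N i * Dz b zl zr N i -
      Dzz a zl zr N i)

/-- `α_i = b_i + (δz²/12)((a_i/b_i) Δ_z b_i - 2Δ_z a_i + Δ_zz b_i - (2/b_i)(Δ_z b_i)² + a_i²/b_i)`. -/
noncomputable def αc (a b : ℝ → ℝ) (zl zr : ℝ) (N i : ℕ) : ℝ :=
  b (gridz zl zr N i) + (dz zl zr N ^ 2 / 12) *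
    ((a (gridz zl zr N i) / b (gridz zl zr N i)) * Dz b zl zr N i -
      2 * Dz a zl zr N i + Dzz b zl zr N i -
      (2 / b (gridz zl zr N i)) * Dz b zl zr N i ^ 2 +
      a (gridz zl zr N i) ^ 2 / b (gridz zl zr N i))

/-- `p_i = (2 + δz γ_i)/(24 δv)`. -/
noncomputable def pc (a b : ℝ → ℝ) (zl zr : ℝ) (N : ℕ) (δv : ℝ) (i : ℕ) : ℝ :=
  (2 + dz zl zr N * γc a b zl zr N i) / (24 * δv)

/-- `q_i = 5/(6 δv)`. -/
noncomputable def qc (δv : ℝ) (i : ℕ) : ℝ := 5 / (6 * δv)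

/-- `r_i = (2 - δz γ_i)/(24 δv)`. -/
noncomputable def rc (a b : ℝ → ℝ) (zl zr : ℝ) (N : ℕ) (δv : ℝ) (i : ℕ) : ℝ :=
  (2 - dz zl zr N * γc a b zl zr N i) / (24 * δv)

/-- `l_i = -ζ_i/(2 δz) - α_i/δz²`. -/
noncomputable def lc (a b : ℝ → ℝ) (zl zr : ℝ) (N i : ℕ) : ℝ :=
  -ζc a b zl zr N i / (2 * dz zl zr N) - αc a b zl zr N i / dz zl zr N ^ 2

/-- `m_i = 2 α_i/δz²`. -/
noncomputable def mc (a b : ℝ → ℝ) (zl zr : ℝ) (N i : ℕ) : ℝ :=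
  2 * αc a b zl zr N i / dz zl zr N ^ 2

/-- `n_i = ζ_i/(2 δz) - α_i/δz²`. -/
noncomputable def nc (a b : ℝ → ℝ) (zl zr : ℝ) (N i : ℕ) : ℝ :=
  ζc a b zl zr N i / (2 * dz zl zr N) - αc a b zl zr N i / dz zl zr N ^ 2

/-- The `(N-1)×(N-1)` tridiagonal matrix `X` with `X_{i,i} = q_i`, `X_{i,i+1} = r_i`,
`X_{i+1,i} = p_{i+1}`. -/
noncomputable def Xmat (a b : ℝ → ℝ) (zl zr : ℝ) (N : ℕ) (δv : ℝ) :
    Matrix (Fin (N - 1)) (Fin (N - 1)) ℝ :=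
  triMatR (N - 1) (pc a b zl zr N δv) (qc δv) (rc a b zl zr N δv)

/-- The `(N-1)×(N-1)` tridiagonal matrix `Y` with `Y_{i,i} = m_i`, `Y_{i,i+1} = n_i`,
`Y_{i+1,i} = l_{i+1}`. -/
noncomputable def Ymat (a b : ℝ → ℝ) (zl zr : ℝ) (N : ℕ) (δv : ℝ) :
    Matrix (Fin (N - 1)) (Fin (N - 1)) ℝ :=
  triMatR (N - 1) (lc a b zl zr N) (mc a b zl zr N) (nc a b zl zr N)

/-! Since `δz γ_i = (δz a_i + b_{i+1} - b_{i-1}) / b_i` and `b` is uniformly continuous, `δz γ_i`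
is small for large `N`, so the off-diagonal entries of `X` are at most `1/(6δv)` while its diagonal
is `5/(6δv)`: `X` is a perturbation of `(5/(6δv)) I` of norm at most `1/(3δv)`, whence
`‖X⁻¹‖₂ ≤ 2δv`. The difference quotients in `ζ_i` and `α_i` come multiplied by `δz` or `δz²`, so
these coefficients stay bounded and every entry of `Y` is `O(1/δz²)`; Schur's test turns such
entrywise bounds on a tridiagonal matrix into `‖Y‖₂ = O(1/δz²)`. -/

open scoped Matrix.Norms.L2Operator

theorem Finset.sq_sum_mul_le_sum_abs_mul_sum_abs_mul_sq {ι : Type*} (s : Finset ι) (a x : ι → ℝ) :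
    (∑ j ∈ s, a j * x j) ^ 2 ≤ (∑ j ∈ s, |a j|) * ∑ j ∈ s, |a j| * x j ^ 2 := by
  calc (∑ j ∈ s, a j * x j) ^ 2 = |∑ j ∈ s, a j * x j| ^ 2 := (sq_abs _).symm
    _ ≤ (∑ j ∈ s, |a j * x j|) ^ 2 := by gcongr; exact Finset.abs_sum_le_sum_abs _ _
    _ ≤ _ := Finset.sum_sq_le_sum_mul_sum_of_sq_le_mul _ (fun _ _ => abs_nonneg _)
        (fun _ _ => by positivity) fun j _ => by rw [abs_mul, mul_pow, sq_abs (x j), sq, mul_assoc]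

theorem Finset.sum_ite_le_of_subsingleton {ι : Type*} (s : Finset ι) {p : ι → Prop}
    [DecidablePred p] (hp : ∀ x y, p x → p y → x = y) {c : ℝ} (hc : 0 ≤ c) :
    ∑ j ∈ s, (if p j then c else 0) ≤ c := by
  rw [Finset.sum_ite, Finset.sum_const_zero, add_zero, Finset.sum_const, nsmul_eq_mul]
  refine mul_le_of_le_one_left hc ?_
  exact_mod_cast Finset.card_le_one.mpr fun x hx y hy =>
    hp x y (Finset.mem_filter.mp hx).2 (Finset.mem_filter.mp hy).2

namespace Matrix
variable {m n : Type*} [Fintype m] [Fintype n] [DecidableEq n]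

theorem l2_opNorm_le_sqrt_of_sum_abs_le (A : Matrix m n ℝ) {R C : ℝ}
    (hrow : ∀ i, ∑ j, |A i j| ≤ R) (hcol : ∀ j, ∑ i, |A i j| ≤ C) : ‖A‖ ≤ √(R * C) := by
  rcases isEmpty_or_nonempty m with hm | ⟨⟨i₀⟩⟩
  · rw [Subsingleton.elim A 0, norm_zero]; positivity
  have hR : 0 ≤ R := (Finset.sum_nonneg fun j _ => abs_nonneg _).trans (hrow i₀)
  rw [l2_opNorm_def]
  refine ContinuousLinearMap.opNorm_le_bound _ (Real.sqrt_nonneg _) fun x => ?_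
  have key : ∑ i, (∑ j, A i j * x j) ^ 2 ≤ R * C * ∑ j, x j ^ 2 := calc
    ∑ i, (∑ j, A i j * x j) ^ 2 ≤ ∑ i, R * ∑ j, |A i j| * x j ^ 2 := by
      gcongr with i
      exact (Finset.sq_sum_mul_le_sum_abs_mul_sum_abs_mul_sq _ _ _).trans
        (mul_le_mul_of_nonneg_right (hrow i) (Finset.sum_nonneg fun j _ => by positivity))
    _ = R * ∑ j, (∑ i, |A i j|) * x j ^ 2 := by
      simp only [Finset.mul_sum, Finset.sum_mul]; exact Finset.sum_comm
    _ ≤ R * ∑ j, C * x j ^ 2 := by gcongr with j; exact hcol j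
    _ = R * C * ∑ j, x j ^ 2 := by rw [← Finset.mul_sum, mul_assoc]
  rw [← Real.sqrt_sq (norm_nonneg x), ← Real.sqrt_mul' _ (sq_nonneg _),
    ← Real.sqrt_sq (norm_nonneg _)]
  refine Real.sqrt_le_sqrt ?_
  simpa [EuclideanSpace.norm_sq_eq, ofLp_toLpLin, toLin'_apply, mulVec, dotProduct] using key

theorem isUnit_det_and_l2_opNorm_inv_le_of_le_norm (A : Matrix n n ℝ) {c : ℝ} (hc : 0 < c)
    (h : ∀ x, c * ‖x‖ ≤ ‖toEuclideanCLM (𝕜 := ℝ) A x‖) : IsUnit A.det ∧ ‖A⁻¹‖ ≤ c⁻¹ := by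
  have hinj : Function.Injective A.mulVec := fun v w hvw => by
    have := h (WithLp.toLp 2 (v - w))
    rw [toEuclideanCLM_toLp, mulVec_sub, hvw, sub_self, WithLp.toLp_zero, norm_zero] at this
    have h0 : ‖WithLp.toLp 2 (v - w)‖ = 0 :=
      le_antisymm (nonpos_of_mul_nonpos_right this hc) (norm_nonneg _)
    simpa [sub_eq_zero] using h0
  have hdet : IsUnit A.det := (isUnit_iff_isUnit_det A).mp (mulVec_injective_iff_isUnit.mp hinj)
  refine ⟨hdet, ?_⟩
  rw [cstar_norm_def]
  refine ContinuousLinearMap.opNorm_le_bound _ (inv_nonneg.mpr hc.le) fun y => ?_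
  have hy := h (toEuclideanCLM (𝕜 := ℝ) A⁻¹ y)
  rw [← mul_apply_eq_comp, ← map_mul, mul_nonsing_inv _ hdet, map_one,
    one_apply_eq_self] at hy
  rw [inv_mul_eq_div, le_div_iff₀' hc]
  exact hy

theorem isUnit_det_and_l2_opNorm_inv_le_of_norm_sub_smul_one_le (A : Matrix n n ℝ) {q e : ℝ}
    (hA : ‖A - q • 1‖ ≤ e) (he : e < q) : IsUnit A.det ∧ ‖A⁻¹‖ ≤ (q - e)⁻¹ := by
  refine isUnit_det_and_l2_opNorm_inv_le_of_le_norm A (sub_pos.mpr he) fun x => ?_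
  set E := toEuclideanCLM (𝕜 := ℝ) (A - q • 1)
  have hsplit : toEuclideanCLM (𝕜 := ℝ) A x = q • x + E x := by
    simp [E]
  have hE : ‖E x‖ ≤ e * ‖x‖ :=
    (E.le_opNorm x).trans (mul_le_mul_of_nonneg_right hA (norm_nonneg x))
  have hq : ‖q • x‖ = q * ‖x‖ := by
    rw [norm_smul, Real.norm_of_nonneg ((norm_nonneg _).trans hA |>.trans he.le)]
  have htri := norm_sub_le (q • x + E x) (E x)
  rw [add_sub_cancel_right] at htri
  rw [hsplit, sub_mul]
  linarith

end Matrix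

section Tridiagonal
variable {n : ℕ} {sub dia sup : ℕ → ℝ} {Cl Cd Cu : ℝ}

theorem abs_triMatR_le (hsub : ∀ k, 1 ≤ k → k ≤ n → |sub k| ≤ Cl)
    (hdia : ∀ k, 1 ≤ k → k ≤ n → |dia k| ≤ Cd) (hsup : ∀ k, 1 ≤ k → k ≤ n → |sup k| ≤ Cu)
    (i j : Fin n) :
    |triMatR n sub dia sup i j| ≤ (if i.val = j.val then Cd else 0) +
      (if i.val + 1 = j.val then Cu else 0) + (if j.val + 1 = i.val then Cl else 0) := by
  have hi := i.isLt
  have hj := j.isLt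
  simp only [triMatR, Matrix.of_apply]
  split_ifs <;> first
    | omega
    | simp only [abs_zero, add_zero, le_refl]; done
    | simpa using hdia _ (by omega) (by omega)
    | simpa using hsup _ (by omega) (by omega)
    | simpa using hsub _ (by omega) (by omega)

variable (hsub : ∀ k, 1 ≤ k → k ≤ n → |sub k| ≤ Cl)
    (hdia : ∀ k, 1 ≤ k → k ≤ n → |dia k| ≤ Cd) (hsup : ∀ k, 1 ≤ k → k ≤ n → |sup k| ≤ Cu)
    (hCl : 0 ≤ Cl) (hCd : 0 ≤ Cd) (hCu : 0 ≤ Cu)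
include hsub hdia hsup hCl hCd hCu

theorem sum_abs_triMatR_row_le (i : Fin n) : ∑ j, |triMatR n sub dia sup i j| ≤ Cl + Cd + Cu := by
  refine (Finset.sum_le_sum fun j _ => abs_triMatR_le hsub hdia hsup i j).trans ?_
  simp only [Finset.sum_add_distrib]
  have := Finset.sum_ite_le_of_subsingleton Finset.univ (p := fun j : Fin n => i.val = j.val)
    (fun x y hx hy => Fin.ext (hx.symm.trans hy)) hCd
  have := Finset.sum_ite_le_of_subsingleton Finset.univ (p := fun j : Fin n => i.val + 1 = j.val)
    (fun x y hx hy => Fin.ext (hx.symm.trans hy)) hCu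
  have := Finset.sum_ite_le_of_subsingleton Finset.univ (p := fun j : Fin n => j.val + 1 = i.val)
    (fun x y hx hy => Fin.ext (by omega)) hCl
  linarith

theorem sum_abs_triMatR_col_le (j : Fin n) : ∑ i, |triMatR n sub dia sup i j| ≤ Cl + Cd + Cu := by
  refine (Finset.sum_le_sum fun i _ => abs_triMatR_le hsub hdia hsup i j).trans ?_
  simp only [Finset.sum_add_distrib]
  have := Finset.sum_ite_le_of_subsingleton Finset.univ (p := fun i : Fin n => i.val = j.val)
    (fun x y hx hy => Fin.ext (hx.trans hy.symm)) hCd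
  have := Finset.sum_ite_le_of_subsingleton Finset.univ (p := fun i : Fin n => i.val + 1 = j.val)
    (fun x y hx hy => Fin.ext (by omega)) hCu
  have := Finset.sum_ite_le_of_subsingleton Finset.univ (p := fun i : Fin n => j.val + 1 = i.val)
    (fun x y hx hy => Fin.ext (hx.symm.trans hy)) hCl
  linarith

theorem l2_opNorm_triMatR_le : ‖triMatR n sub dia sup‖ ≤ Cl + Cd + Cu := by
  have h := Matrix.l2_opNorm_le_sqrt_of_sum_abs_le _
    (sum_abs_triMatR_row_le hsub hdia hsup hCl hCd hCu)
    (sum_abs_triMatR_col_le hsub hdia hsup hCl hCd hCu)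
  rwa [Real.sqrt_mul_self (by positivity)] at h

end Tridiagonal

theorem triMatR_sub_smul_one {n : ℕ} {sub dia sup : ℕ → ℝ} {q : ℝ}
    (hdia : ∀ k, 1 ≤ k → k ≤ n → dia k = q) :
    triMatR n sub dia sup - q • 1 = triMatR n sub (fun _ => 0) sup := by
  ext i j
  have hi := i.isLt
  simp only [triMatR, Matrix.sub_apply, Matrix.smul_apply, Matrix.one_apply, Matrix.of_apply,
    Fin.ext_iff, smul_eq_mul]
  split_ifs <;> simp [hdia (i.val + 1) (by omega) (by omega)]

open Filter Topology Set

section Grid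
variable {zl zr : ℝ} {N i : ℕ}

theorem dz_pos (h : zl < zr) (hN : 0 < N) : 0 < dz zl zr N :=
  div_pos (sub_pos.2 h) (Nat.cast_pos.2 hN)

theorem tendsto_dz : Tendsto (dz zl zr) atTop (𝓝 0) :=
  tendsto_const_div_atTop_nhds_zero_nat (zr - zl)

theorem gridz_mem_Icc (h : zl ≤ zr) (hi : i ≤ N) : gridz zl zr N i ∈ Icc zl zr := by
  rcases Nat.eq_zero_or_pos N with rfl | hN
  · simp [gridz, dz, h]
  have hiN : (i : ℝ) / N ≤ 1 := div_le_one_of_le₀ (Nat.cast_le.2 hi) (Nat.cast_nonneg N)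
  have hgrid : gridz zl zr N i = zl + (i / N) * (zr - zl) := by rw [gridz, dz]; ring
  have hi0 : 0 ≤ (i : ℝ) / N := by positivity
  rw [hgrid]
  constructor
  · linarith [mul_nonneg hi0 (sub_nonneg.2 h)]
  · linarith [mul_le_of_le_one_left (sub_nonneg.2 h) hiN]

theorem gridz_add_one_sub_gridz_sub_one (hi : 1 ≤ i) :
    gridz zl zr N (i + 1) - gridz zl zr N (i - 1) = 2 * dz zl zr N := by
  rw [gridz, gridz, Nat.cast_sub hi]
  push_cast
  ring

variable {f : ℝ → ℝ} {F : ℝ}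

theorem dz_mul_Dz (h : zl < zr) (hi : i < N) :
    dz zl zr N * Dz f zl zr N i = (f (gridz zl zr N (i + 1)) - f (gridz zl zr N (i - 1))) / 2 := by
  have := (dz_pos h (i.zero_le.trans_lt hi)).ne'
  rw [Dz]
  field_simp

theorem abs_dz_mul_Dz_le (h : zl < zr) (hf : ∀ z ∈ Icc zl zr, |f z| ≤ F) (hi : i < N) :
    |dz zl zr N * Dz f zl zr N i| ≤ F := by
  rw [dz_mul_Dz h hi, abs_div, abs_two, div_le_iff₀ two_pos]
  have h₁ := hf _ (gridz_mem_Icc h.le hi)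
  have h₂ := hf _ (gridz_mem_Icc h.le (show i - 1 ≤ N by omega))
  linarith [abs_sub (f (gridz zl zr N (i + 1))) (f (gridz zl zr N (i - 1)))]

theorem abs_dz_sq_mul_Dzz_le (h : zl < zr) (hf : ∀ z ∈ Icc zl zr, |f z| ≤ F) (hi : i < N) :
    |dz zl zr N ^ 2 * Dzz f zl zr N i| ≤ 4 * F := by
  have := (dz_pos h (i.zero_le.trans_lt hi)).ne'
  have hDzz : dz zl zr N ^ 2 * Dzz f zl zr N i =
      f (gridz zl zr N (i + 1)) - 2 * f (gridz zl zr N i) + f (gridz zl zr N (i - 1)) := by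
    rw [Dzz]; field_simp
  have h₁ := hf _ (gridz_mem_Icc h.le hi)
  have h₂ := hf _ (gridz_mem_Icc h.le hi.le)
  have h₃ := hf _ (gridz_mem_Icc h.le (show i - 1 ≤ N by omega))
  rw [hDzz]
  calc _ ≤ |f (gridz zl zr N (i + 1))| + |2 * f (gridz zl zr N i)| + |f (gridz zl zr N (i - 1))| :=
        (abs_add_le _ _).trans (add_le_add_left (abs_sub _ _) _)
    _ ≤ 4 * F := by rw [abs_mul, abs_two]; linarith

theorem eventually_abs_dz_mul_Dz_le (h : zl < zr) (hf : ContinuousOn f (Icc zl zr)) {η : ℝ}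
    (hη : 0 < η) : ∀ᶠ N in atTop, ∀ i, 1 ≤ i → i < N → |dz zl zr N * Dz f zl zr N i| ≤ η := by
  obtain ⟨δ, hδ, hfδ⟩ := Metric.uniformContinuousOn_iff_le.1
    (isCompact_Icc.uniformContinuousOn_of_continuous hf) (2 * η) (by positivity)
  filter_upwards [tendsto_dz.eventually (eventually_le_nhds (half_pos hδ))] with N hN i hi hiN
  have hdist : dist (gridz zl zr N (i + 1)) (gridz zl zr N (i - 1)) ≤ δ := by
    rw [Real.dist_eq, gridz_add_one_sub_gridz_sub_one hi,
      abs_of_pos (mul_pos two_pos (dz_pos h (i.zero_le.trans_lt hiN)))]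
    exact (le_div_iff₀' two_pos).1 hN
  have := hfδ _ (gridz_mem_Icc h.le hiN) _ (gridz_mem_Icc h.le (show i - 1 ≤ N by omega)) hdist
  rw [dz_mul_Dz h hiN, abs_div, abs_two, ← Real.dist_eq, div_le_iff₀' two_pos]
  exact this

end Grid

section Coefficients
variable {zl zr ε A B : ℝ} {a b : ℝ → ℝ} {N i : ℕ}

theorem abs_dz_mul_γc_le (hε : 0 < ε) (hb : ε ≤ b (gridz zl zr N i))
    (ha : |dz zl zr N * a (gridz zl zr N i)| ≤ ε) (hDb : |dz zl zr N * Dz b zl zr N i| ≤ ε / 2) :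
    |dz zl zr N * γc a b zl zr N i| ≤ 2 := by
  have hb0 : 0 < b (gridz zl zr N i) := hε.trans_le hb
  have hγ : dz zl zr N * γc a b zl zr N i =
      (dz zl zr N * a (gridz zl zr N i) + 2 * (dz zl zr N * Dz b zl zr N i)) /
        b (gridz zl zr N i) := by
    rw [γc]; ring
  rw [hγ, abs_div, abs_of_pos hb0, div_le_iff₀ hb0]
  calc _ ≤ |dz zl zr N * a (gridz zl zr N i)| + 2 * |dz zl zr N * Dz b zl zr N i| := by
        refine (abs_add_le _ _).trans_eq ?_
        rw [abs_mul 2, abs_two]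
    _ ≤ 2 * b (gridz zl zr N i) := by linarith

theorem eventually_abs_dz_mul_γc_le (h : zl < zr) (hε : 0 < ε) (ha : ContinuousOn a (Icc zl zr))
    (hb : ContinuousOn b (Icc zl zr)) (hbε : ∀ z ∈ Icc zl zr, ε ≤ b z) :
    ∀ᶠ N in atTop, ∀ i, 1 ≤ i → i < N → |dz zl zr N * γc a b zl zr N i| ≤ 2 := by
  obtain ⟨A, hA⟩ := isCompact_Icc.exists_bound_of_continuousOn ha
  have hdzA : ∀ᶠ N in atTop, dz zl zr N * A ≤ ε := by
    have := (tendsto_dz (zl := zl) (zr := zr)).mul_const A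
    rw [zero_mul] at this
    exact this.eventually (eventually_le_nhds hε)
  filter_upwards [hdzA, eventually_abs_dz_mul_Dz_le h hb (half_pos hε)] with N hN hDb i hi hiN
  have hmem := gridz_mem_Icc h.le hiN.le
  refine abs_dz_mul_γc_le hε (hbε _ hmem) ?_ (hDb i hi hiN)
  rw [abs_mul, abs_of_pos (dz_pos h (by omega))]
  exact (mul_le_mul_of_nonneg_left (hA _ hmem) (dz_pos h (by omega)).le).trans hN

variable (h : zl < zr) (hε : 0 < ε) (haA : ∀ z ∈ Icc zl zr, |a z| ≤ A)
  (hbB : ∀ z ∈ Icc zl zr, |b z| ≤ B) (hbε : ∀ z ∈ Icc zl zr, ε ≤ b z)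
  (hdz : dz zl zr N ≤ 1) (hi : i < N)
include h hε haA hbB hbε hdz hi

theorem abs_ζc_le : |ζc a b zl zr N i| ≤ A + (A / ε * A + 2 / ε * A * B + 4 * A) / 12 := by
  have hA : 0 ≤ A := (abs_nonneg _).trans (haA zl (left_mem_Icc.2 h.le))
  have hd : 0 ≤ dz zl zr N := (dz_pos h (by omega)).le
  have hx := haA _ (gridz_mem_Icc h.le hi.le)
  have hy := hbε _ (gridz_mem_Icc h.le hi.le)
  have hu := abs_dz_mul_Dz_le h haA hi
  have hv := abs_dz_mul_Dz_le h hbB hi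
  have hw := abs_dz_sq_mul_Dzz_le h haA hi
  have hζ : ζc a b zl zr N i = a (gridz zl zr N i) -
      (dz zl zr N * (a (gridz zl zr N i) / b (gridz zl zr N i)) * (dz zl zr N * Dz a zl zr N i) +
        2 / b (gridz zl zr N i) * (dz zl zr N * Dz a zl zr N i) * (dz zl zr N * Dz b zl zr N i) -
        dz zl zr N ^ 2 * Dzz a zl zr N i) / 12 := by
    rw [ζc]; ring
  rw [hζ]
  generalize dz zl zr N * Dz a zl zr N i = u at hu
  generalize dz zl zr N * Dz b zl zr N i = v at hv
  generalize dz zl zr N ^ 2 * Dzz a zl zr N i = w at hw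
  generalize dz zl zr N = d at hd hdz
  generalize a (gridz zl zr N i) = x at hx
  generalize b (gridz zl zr N i) = y at hy
  have hy0 : 0 < y := hε.trans_le hy
  have hxy : |x / y| ≤ A / ε := by rw [abs_div, abs_of_pos hy0]; gcongr
  have h2y : |2 / y| ≤ 2 / ε := by rw [abs_of_pos (by positivity)]; gcongr
  calc |x - (d * (x / y) * u + 2 / y * u * v - w) / 12|
      ≤ |x| + (|d| * |x / y| * |u| + |2 / y| * |u| * |v| + |w|) / 12 := by
        refine (abs_sub _ _).trans ?_
        rw [abs_div, abs_of_pos (by norm_num : (0:ℝ) < 12), ← abs_mul, ← abs_mul, ← abs_mul,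
          ← abs_mul]
        gcongr
        exact (abs_sub _ _).trans (add_le_add_left (abs_add_le _ _) _)
    _ ≤ A + (1 * (A / ε) * A + 2 / ε * A * B + 4 * A) / 12 := by
        rw [abs_of_nonneg hd]
        gcongr
    _ = _ := by ring

theorem abs_αc_le :
    |αc a b zl zr N i| ≤ B + (A / ε * B + 2 * A + 4 * B + 2 / ε * B ^ 2 + A ^ 2 / ε) / 12 := by
  have hA : 0 ≤ A := (abs_nonneg _).trans (haA zl (left_mem_Icc.2 h.le))
  have hd : 0 ≤ dz zl zr N := (dz_pos h (by omega)).le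
  have hx := haA _ (gridz_mem_Icc h.le hi.le)
  have hy := hbε _ (gridz_mem_Icc h.le hi.le)
  have hyB := hbB _ (gridz_mem_Icc h.le hi.le)
  have hu := abs_dz_mul_Dz_le h haA hi
  have hv := abs_dz_mul_Dz_le h hbB hi
  have hw := abs_dz_sq_mul_Dzz_le h hbB hi
  have hα : αc a b zl zr N i = b (gridz zl zr N i) +
      (dz zl zr N * (a (gridz zl zr N i) / b (gridz zl zr N i)) * (dz zl zr N * Dz b zl zr N i) -
        2 * dz zl zr N * (dz zl zr N * Dz a zl zr N i) + dz zl zr N ^ 2 * Dzz b zl zr N i -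
        2 / b (gridz zl zr N i) * (dz zl zr N * Dz b zl zr N i) ^ 2 +
        dz zl zr N ^ 2 * (a (gridz zl zr N i) ^ 2 / b (gridz zl zr N i))) / 12 := by
    rw [αc]; ring
  rw [hα]
  generalize dz zl zr N * Dz a zl zr N i = u at hu
  generalize dz zl zr N * Dz b zl zr N i = v at hv
  generalize dz zl zr N ^ 2 * Dzz b zl zr N i = w at hw
  generalize dz zl zr N = d at hd hdz
  generalize a (gridz zl zr N i) = x at hx
  generalize b (gridz zl zr N i) = y at hy hyB
  have hy0 : 0 < y := hε.trans_le hy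
  have hxy : |x / y| ≤ A / ε := by rw [abs_div, abs_of_pos hy0]; gcongr
  have h2y : |2 / y| ≤ 2 / ε := by rw [abs_of_pos (by positivity)]; gcongr
  have hx2y : |x ^ 2 / y| ≤ A ^ 2 / ε := by rw [abs_div, abs_of_pos hy0, abs_pow]; gcongr
  calc |y + (d * (x / y) * v - 2 * d * u + w - 2 / y * v ^ 2 + d ^ 2 * (x ^ 2 / y)) / 12|
      ≤ |y| + (|d| * |x / y| * |v| + 2 * |d| * |u| + |w| + |2 / y| * |v| ^ 2 +
          |d| ^ 2 * |x ^ 2 / y|) / 12 := by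
        refine (abs_add_le _ _).trans ?_
        rw [abs_div, abs_of_pos (by norm_num : (0:ℝ) < 12)]
        gcongr
        have h₁ := abs_sub (d * (x / y) * v) (2 * d * u)
        have h₂ := abs_add_le (d * (x / y) * v - 2 * d * u) w
        have h₃ := abs_sub (d * (x / y) * v - 2 * d * u + w) (2 / y * v ^ 2)
        have h₄ :=
          abs_add_le (d * (x / y) * v - 2 * d * u + w - 2 / y * v ^ 2) (d ^ 2 * (x ^ 2 / y))
        simp only [abs_mul, abs_pow, abs_two] at h₁ h₂ h₃ h₄
        linarith
    _ ≤ B + (1 * (A / ε) * B + 2 * 1 * A + 4 * B + 2 / ε * B ^ 2 + 1 ^ 2 * (A ^ 2 / ε)) / 12 := by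
        rw [abs_of_nonneg hd]
        gcongr
    _ = _ := by ring

end Coefficients

theorem exists_abs_ζc_le_and_abs_αc_le {zl zr ε : ℝ} {a b : ℝ → ℝ} (h : zl < zr) (hε : 0 < ε)
    (ha : ContinuousOn a (Icc zl zr)) (hb : ContinuousOn b (Icc zl zr))
    (hbε : ∀ z ∈ Icc zl zr, ε ≤ b z) :
    ∃ C > 0, ∀ N, dz zl zr N ≤ 1 → ∀ i < N, |ζc a b zl zr N i| ≤ C ∧ |αc a b zl zr N i| ≤ C := by
  obtain ⟨A, haA⟩ := isCompact_Icc.exists_bound_of_continuousOn ha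
  obtain ⟨B, hbB⟩ := isCompact_Icc.exists_bound_of_continuousOn hb
  have hzl : zl ∈ Icc zl zr := left_mem_Icc.2 h.le
  have hA : 0 ≤ A := (norm_nonneg _).trans (haA zl hzl)
  have hB : 0 < B := hε.trans_le ((hbε zl hzl).trans ((le_abs_self _).trans (hbB zl hzl)))
  refine ⟨max (A + (A / ε * A + 2 / ε * A * B + 4 * A) / 12)
    (B + (A / ε * B + 2 * A + 4 * B + 2 / ε * B ^ 2 + A ^ 2 / ε) / 12),
    lt_max_of_lt_right (by positivity), fun N hdz i hi => ⟨?_, ?_⟩⟩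
  · exact (abs_ζc_le h hε haA hbB hbε hdz hi).trans (le_max_left _ _)
  · exact (abs_αc_le h hε haA hbB hbε hdz hi).trans (le_max_right _ _)

section Matrices
variable {zl zr : ℝ} {a b : ℝ → ℝ} {N : ℕ} {δv : ℝ}

theorem isUnit_det_Xmat_and_l2_opNorm_inv_le (hδv : 0 < δv)
    (hγ : ∀ k, 1 ≤ k → k < N → |dz zl zr N * γc a b zl zr N k| ≤ 2) :
    IsUnit (Xmat a b zl zr N δv).det ∧ ‖(Xmat a b zl zr N δv)⁻¹‖ ≤ 2 * δv := by
  have hpr : ∀ k, 1 ≤ k → k ≤ N - 1 →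
      |pc a b zl zr N δv k| ≤ 1 / (6 * δv) ∧ |rc a b zl zr N δv k| ≤ 1 / (6 * δv) := by
    intro k hk hkN
    have hγk := hγ k hk (by omega)
    have h4 : 1 / (6 * δv) = 4 / (24 * δv) := by field_simp; norm_num
    rw [pc, rc, abs_div, abs_div, abs_of_pos (by positivity : (0 : ℝ) < 24 * δv), h4]
    constructor <;> gcongr
    · linarith [abs_add_le 2 (dz zl zr N * γc a b zl zr N k), (abs_two : |(2 : ℝ)| = 2)]
    · linarith [abs_sub 2 (dz zl zr N * γc a b zl zr N k), (abs_two : |(2 : ℝ)| = 2)]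
  have hE : ‖Xmat a b zl zr N δv - (5 / (6 * δv)) • 1‖ ≤ 1 / (6 * δv) + 0 + 1 / (6 * δv) := by
    rw [Xmat, triMatR_sub_smul_one (dia := qc δv) (q := 5 / (6 * δv)) fun _ _ _ => rfl]
    exact l2_opNorm_triMatR_le (fun k hk hkN => (hpr k hk hkN).1) (by simp)
      (fun k hk hkN => (hpr k hk hkN).2) (by positivity) le_rfl (by positivity)
  have hq : (5 / (6 * δv) - (1 / (6 * δv) + 0 + 1 / (6 * δv)))⁻¹ = 2 * δv := by
    field_simp; norm_num
  rw [← hq]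
  exact Matrix.isUnit_det_and_l2_opNorm_inv_le_of_norm_sub_smul_one_le _ hE
    (by field_simp; norm_num)

theorem l2_opNorm_Ymat_le (h : zl < zr) {C : ℝ} (hC : 0 ≤ C) (hdz : dz zl zr N ≤ 1)
    (hζ : ∀ k, 1 ≤ k → k < N → |ζc a b zl zr N k| ≤ C)
    (hα : ∀ k, 1 ≤ k → k < N → |αc a b zl zr N k| ≤ C) :
    ‖Ymat a b zl zr N δv‖ ≤ 6 * C / dz zl zr N ^ 2 := by
  have hζ' : ∀ k, 1 ≤ k → k ≤ N - 1 →
      |ζc a b zl zr N k / (2 * dz zl zr N)| ≤ C / dz zl zr N ^ 2 := by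
    intro k hk hkN
    have hd := dz_pos h (show 0 < N by omega)
    rw [abs_div, abs_of_pos (by positivity : 0 < 2 * dz zl zr N)]
    calc _ ≤ C / (2 * dz zl zr N) := by gcongr; exact hζ k hk (by omega)
      _ ≤ C / dz zl zr N ^ 2 := by gcongr; nlinarith
  have hα' : ∀ k, 1 ≤ k → k ≤ N - 1 →
      |αc a b zl zr N k / dz zl zr N ^ 2| ≤ C / dz zl zr N ^ 2 := by
    intro k hk hkN
    rw [abs_div, abs_of_nonneg (sq_nonneg (dz zl zr N))]
    gcongr
    exact hα k hk (by omega)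
  refine (l2_opNorm_triMatR_le (Cl := 2 * (C / dz zl zr N ^ 2)) (Cd := 2 * (C / dz zl zr N ^ 2))
    (Cu := 2 * (C / dz zl zr N ^ 2)) ?_ ?_ ?_ (by positivity) (by positivity)
    (by positivity)).trans_eq (by ring)
  · intro k hk hkN
    rw [lc, neg_div]
    linarith [abs_sub (-(ζc a b zl zr N k / (2 * dz zl zr N))) (αc a b zl zr N k / dz zl zr N ^ 2),
      abs_neg (ζc a b zl zr N k / (2 * dz zl zr N)), hζ' k hk hkN, hα' k hk hkN]
  · intro k hk hkN
    rw [mc, mul_div_assoc, abs_mul, abs_two]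
    linarith [hα' k hk hkN]
  · intro k hk hkN
    rw [nc]
    linarith [abs_sub (ζc a b zl zr N k / (2 * dz zl zr N)) (αc a b zl zr N k / dz zl zr N ^ 2),
      hζ' k hk hkN, hα' k hk hkN]

end Matrices

/-- There are `K > 0` and `N₀ ≥ 2` such that for all `N ≥ N₀` and `δv > 0`, the matrix
`X` is invertible and `‖X⁻¹ Y‖₂ ≤ K δv/δz²`: the 2-norm of `W = X⁻¹ Y` is `O(δv/δz²)`. -/
theorem stmt14 (zl zr : ℝ) (hz : zl < zr) (ε : ℝ) (hε : 0 < ε) (a b : ℝ → ℝ)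
    (ha : ContDiffOn ℝ 2 a (Set.Icc zl zr)) (hb : ContDiffOn ℝ 2 b (Set.Icc zl zr))
    (hbe : ∀ z ∈ Set.Icc zl zr, ε ≤ b z) :
    ∃ K : ℝ, 0 < K ∧ ∃ N₀ : ℕ, 2 ≤ N₀ ∧ ∀ N, N₀ ≤ N → ∀ δv : ℝ, 0 < δv →
      IsUnit (Xmat a b zl zr N δv).det ∧
      opNorm2 ((Xmat a b zl zr N δv)⁻¹ * Ymat a b zl zr N δv) ≤
        K * δv / dz zl zr N ^ 2 := by
  obtain ⟨C, hC, hζα⟩ :=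
    exists_abs_ζc_le_and_abs_αc_le hz hε ha.continuousOn hb.continuousOn hbe
  obtain ⟨N₀, hN₀⟩ := eventually_atTop.1 <|
    (eventually_abs_dz_mul_γc_le hz hε ha.continuousOn hb.continuousOn hbe).and
      (tendsto_dz.eventually (eventually_le_nhds one_pos))
  refine ⟨12 * C, by positivity, max N₀ 2, le_max_right _ _, fun N hN δv hδv => ?_⟩
  obtain ⟨hγ, hdz⟩ := hN₀ N (le_of_max_le_left hN)
  obtain ⟨hdet, hXinv⟩ := isUnit_det_Xmat_and_l2_opNorm_inv_le hδv hγ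
  have hY := l2_opNorm_Ymat_le (δv := δv) hz hC.le hdz (fun k _ hk => (hζα N hdz k hk).1)
    (fun k _ hk => (hζα N hdz k hk).2)
  refine ⟨hdet, ?_⟩
  calc opNorm2 ((Xmat a b zl zr N δv)⁻¹ * Ymat a b zl zr N δv)
      ≤ ‖(Xmat a b zl zr N δv)⁻¹‖ * ‖Ymat a b zl zr N δv‖ := Matrix.l2_opNorm_mul _ _
    _ ≤ 2 * δv * (6 * C / dz zl zr N ^ 2) := by gcongr
    _ = 12 * C * δv / dz zl zr N ^ 2 := by ring
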